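/- arXiv:math/0605237 — 4 statements merged into one kernel-verified Lean document; each statement's English description precedes it below -/
import Mathlib

section
/- Let X = (X_1,…,X_n) and Y = (Y_1,…,Y_n) be n-tuples of bounded operators on a complex Hilbert space H with ‖X‖_row ≤ r and ‖Y‖_row ≤ r for some r ≥ 0. Then for every k ≥ 1, ‖∑_{|α|=k} (X_α − Y_α)(X_α − Y_α)*‖^{1/2} ≤ k r^{k−1} ‖∑_{i=1}^n (X_i − Y_i)(X_i − Y_i)*‖^{1/2}. -/
open Filter MeasureTheory
open scoped ENNReal

variable {n : ℕ}

/-- The operator `X_α` associated to a word `α` in the free monoid `F_n^+`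
(words are encoded as lists over `Fin n`). -/
noncomputable def wordProd {H : Type*} [NormedAddCommGroup H] [NormedSpace ℂ H]
    (X : Fin n → H →L[ℂ] H) (α : List (Fin n)) : H →L[ℂ] H :=
  (α.map X).prod

/-- The level-`k` piece `∑_{|α|=k} a_α X_α` of a free power series (words of length `k`
are encoded as functions `Fin k → Fin n`). -/
noncomputable def lvlOp {H : Type*} [NormedAddCommGroup H] [NormedSpace ℂ H]
    (a : List (Fin n) → ℂ) (X : Fin n → H →L[ℂ] H) (k : ℕ) : H →L[ℂ] H :=
  ∑ w : Fin k → Fin n, a (List.ofFn w) • wordProd X (List.ofFn w)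

/-- `(∑_{|α|=k} |a_α|²)^{1/2}`. -/
noncomputable def lvlCoef (a : List (Fin n) → ℂ) (k : ℕ) : ℝ :=
  Real.sqrt (∑ w : Fin k → Fin n, ‖a (List.ofFn w)‖ ^ 2)

/-- `1/R = limsup_k (∑_{|α|=k} |a_α|²)^{1/(2k)}`, as an extended nonnegative real;
the radius of convergence is `(radiusInv a)⁻¹ ∈ [0,∞]`. -/
noncomputable def radiusInv (a : List (Fin n) → ℂ) : ℝ≥0∞ :=
  Filter.limsup (fun k : ℕ => ENNReal.ofReal (lvlCoef a k ^ (1 / (2 * (k : ℝ))))) Filter.atTop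

/-- The row norm `‖X_1X_1^* + ⋯ + X_nX_n^*‖^{1/2}`. -/
noncomputable def rowNorm {H : Type*} [NormedAddCommGroup H] [InnerProductSpace ℂ H]
    [CompleteSpace H] (X : Fin n → H →L[ℂ] H) : ℝ :=
  Real.sqrt ‖∑ i, X i ∘L ContinuousLinearMap.adjoint (X i)‖

/-- The joint spectral radius `limsup_k ‖∑_{|α|=k} X_α X_α^*‖^{1/(2k)}`,
as an extended nonnegative real. -/
noncomputable def jsr {H : Type*} [NormedAddCommGroup H] [InnerProductSpace ℂ H]
    [CompleteSpace H] (X : Fin n → H →L[ℂ] H) : ℝ≥0∞ :=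
  Filter.limsup (fun k : ℕ => ENNReal.ofReal
    (‖∑ w : Fin k → Fin n, wordProd X (List.ofFn w) ∘L
        ContinuousLinearMap.adjoint (wordProd X (List.ofFn w))‖ ^ (1 / (2 * (k : ℝ))))) Filter.atTop

/- ### Auxiliary development: the column operator associated to a tuple of operators -/

set_option synthInstance.maxHeartbeats 1000000
set_option maxHeartbeats 1000000

open ContinuousLinearMap in
/-- The column operator `x ↦ (T_i^* x)_i`, viewed as a map into `ℓ²(ι; H)`. -/
noncomputable def colOp {H : Type*} [NormedAddCommGroup H] [InnerProductSpace ℂ H]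
    [CompleteSpace H] {ι : Type*} [Fintype ι] (T : ι → H →L[ℂ] H) :
    H →L[ℂ] PiLp 2 (fun _ : ι => H) :=
  (PiLp.continuousLinearEquiv 2 ℂ (fun _ : ι => H)).symm.toContinuousLinearMap ∘L
    ContinuousLinearMap.pi fun i => adjoint (T i)

section ColOp
open ContinuousLinearMap
variable {H : Type*} [NormedAddCommGroup H] [InnerProductSpace ℂ H] [CompleteSpace H]
variable {ι κ : Type*} [Fintype ι] [Fintype κ]

noncomputable instance piLpComplete : CompleteSpace (PiLp 2 fun _ : ι => H) :=
  inferInstance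

@[simp] lemma colOp_apply (T : ι → H →L[ℂ] H) (x : H) (i : ι) :
    colOp T x i = adjoint (T i) x := rfl

lemma adjoint_comp_colOp (T : ι → H →L[ℂ] H) :
    adjoint (colOp T) ∘L colOp T = ∑ i, T i ∘L adjoint (T i) := by
  ext x
  refine ext_inner_left ℂ fun v => ?_
  rw [ContinuousLinearMap.comp_apply, adjoint_inner_right, PiLp.inner_apply,
    ContinuousLinearMap.sum_apply, inner_sum]
  simp only [colOp_apply]
  refine Finset.sum_congr rfl fun i _ => ?_
  rw [ContinuousLinearMap.comp_apply]
  simpa using adjoint_inner_left (T i) ((adjoint (T i)) x) v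

lemma norm_colOp (T : ι → H →L[ℂ] H) :
    Real.sqrt ‖∑ i, T i ∘L adjoint (T i)‖ = ‖colOp T‖ := by
  rw [← adjoint_comp_colOp, norm_adjoint_comp_self, Real.sqrt_mul_self (norm_nonneg _)]

lemma norm_colOp_apply_sq (T : ι → H →L[ℂ] H) (x : H) :
    ‖colOp T x‖ ^ 2 = ∑ i, ‖adjoint (T i) x‖ ^ 2 := by
  rw [PiLp.norm_sq_eq_of_L2]
  simp only [colOp_apply]

lemma norm_colOp_reindex (e : κ ≃ ι) (T : ι → H →L[ℂ] H) :
    ‖colOp (fun j => T (e j))‖ = ‖colOp T‖ := by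
  rw [← norm_colOp, ← norm_colOp, Equiv.sum_comp e (fun i => T i ∘L adjoint (T i))]

lemma colOp_add (T S : ι → H →L[ℂ] H) :
    colOp (fun i => T i + S i) = colOp T + colOp S := by
  ext x i
  show adjoint (T i + S i) x = (colOp T x + colOp S x) i
  rw [map_add]; rfl

lemma norm_colOp_mul_le (A : ι → H →L[ℂ] H) (B : κ → H →L[ℂ] H) :
    ‖colOp (fun p : ι × κ => A p.1 ∘L B p.2)‖ ≤ ‖colOp A‖ * ‖colOp B‖ := by
  refine ContinuousLinearMap.opNorm_le_bound _ (by positivity) fun x => ?_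
  have h1 : ‖colOp (fun p : ι × κ => A p.1 ∘L B p.2) x‖ ^ 2
      ≤ (‖colOp A‖ * ‖colOp B‖ * ‖x‖) ^ 2 := by
    rw [norm_colOp_apply_sq]
    calc ∑ p : ι × κ, ‖adjoint (A p.1 ∘L B p.2) x‖ ^ 2
        = ∑ u : ι, ∑ v : κ, ‖adjoint (B v) (adjoint (A u) x)‖ ^ 2 := by
          rw [Fintype.sum_prod_type]
          simp [ContinuousLinearMap.adjoint_comp]
      _ = ∑ u : ι, ‖colOp B (adjoint (A u) x)‖ ^ 2 := by
          simp [norm_colOp_apply_sq]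
      _ ≤ ∑ u : ι, (‖colOp B‖ * ‖adjoint (A u) x‖) ^ 2 := by
          refine Finset.sum_le_sum fun u _ => ?_
          exact pow_le_pow_left₀ (norm_nonneg _) ((colOp B).le_opNorm _) 2
      _ = ‖colOp B‖ ^ 2 * ∑ u, ‖adjoint (A u) x‖ ^ 2 := by
          rw [Finset.mul_sum]; simp [mul_pow]
      _ = ‖colOp B‖ ^ 2 * ‖colOp A x‖ ^ 2 := by rw [norm_colOp_apply_sq]
      _ ≤ ‖colOp B‖ ^ 2 * (‖colOp A‖ * ‖x‖) ^ 2 := by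
          refine mul_le_mul_of_nonneg_left ?_ (by positivity)
          exact pow_le_pow_left₀ (norm_nonneg _) ((colOp A).le_opNorm _) 2
      _ = (‖colOp A‖ * ‖colOp B‖ * ‖x‖) ^ 2 := by ring
  exact (pow_le_pow_iff_left₀ (norm_nonneg _) (by positivity) two_ne_zero).mp h1

end ColOp

section Words
open ContinuousLinearMap
variable {H : Type*} [NormedAddCommGroup H] [InnerProductSpace ℂ H] [CompleteSpace H]

lemma wordProd_cons (X : Fin n → H →L[ℂ] H) (a : Fin n) (l : List (Fin n)) :
    wordProd X (a :: l) = X a ∘L wordProd X l := by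
  simp [wordProd, ContinuousLinearMap.mul_def]

lemma ofFn_consEquiv {k : ℕ} (p : Fin n × (Fin k → Fin n)) :
    List.ofFn ((Fin.consEquiv (fun _ => Fin n)) p) = p.1 :: List.ofFn p.2 := by
  rw [List.ofFn_succ]
  simp [Fin.consEquiv]

lemma norm_colOp_word_le (X : Fin n → H →L[ℂ] H) {r : ℝ} (hr : 0 ≤ r)
    (hX : ‖colOp X‖ ≤ r) (k : ℕ) :
    ‖colOp (fun w : Fin k → Fin n => wordProd X (List.ofFn w))‖ ≤ r ^ k := by
  induction k with
  | zero =>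
      rw [← norm_colOp]
      have h1 : ∑ w : Fin 0 → Fin n, wordProd X (List.ofFn w) ∘L
          adjoint (wordProd X (List.ofFn w)) = (1 : H →L[ℂ] H) := by
        rw [Fintype.sum_unique]
        show wordProd X [] ∘L adjoint (wordProd X []) = 1
        have h0 : wordProd X ([] : List (Fin n)) = 1 := rfl
        rw [h0, ContinuousLinearMap.one_def, ContinuousLinearMap.adjoint_id,
          ContinuousLinearMap.comp_id]
      rw [h1, pow_zero, ContinuousLinearMap.one_def]
      calc Real.sqrt ‖ContinuousLinearMap.id ℂ H‖ ≤ Real.sqrt 1 :=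
            Real.sqrt_le_sqrt ContinuousLinearMap.norm_id_le
        _ = 1 := Real.sqrt_one
  | succ k ih =>
      rw [← norm_colOp_reindex (Fin.consEquiv (fun _ => Fin n))]
      have hfun : (fun p : Fin n × (Fin k → Fin n) =>
            wordProd X (List.ofFn ((Fin.consEquiv (fun _ => Fin n)) p)))
          = fun p => X p.1 ∘L wordProd X (List.ofFn p.2) := by
        funext p
        rw [ofFn_consEquiv, wordProd_cons]
      rw [hfun]
      calc ‖colOp (fun p : Fin n × (Fin k → Fin n) => X p.1 ∘L wordProd X (List.ofFn p.2))‖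
          ≤ ‖colOp X‖ * ‖colOp (fun w : Fin k → Fin n => wordProd X (List.ofFn w))‖ :=
            norm_colOp_mul_le X (fun w : Fin k → Fin n => wordProd X (List.ofFn w))
        _ ≤ r * r ^ k := mul_le_mul hX ih
            (norm_nonneg (colOp (fun w : Fin k → Fin n => wordProd X (List.ofFn w)))) hr
        _ = r ^ (k + 1) := by rw [pow_succ, mul_comm]

lemma norm_colOp_diff_le (X Y : Fin n → H →L[ℂ] H) {r : ℝ} (hr : 0 ≤ r)
    (hX : ‖colOp X‖ ≤ r) (hY : ‖colOp Y‖ ≤ r) (k : ℕ) (hk : 1 ≤ k) :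
    ‖colOp (fun w : Fin k → Fin n =>
        wordProd X (List.ofFn w) - wordProd Y (List.ofFn w))‖
      ≤ (k : ℝ) * r ^ (k - 1) * ‖colOp (fun i => X i - Y i)‖ := by
  induction k, hk using Nat.le_induction with
  | base =>
      rw [← norm_colOp_reindex (Equiv.funUnique (Fin 1) (Fin n)).symm]
      have hfun : (fun i : Fin n =>
            wordProd X (List.ofFn ((Equiv.funUnique (Fin 1) (Fin n)).symm i))
            - wordProd Y (List.ofFn ((Equiv.funUnique (Fin 1) (Fin n)).symm i)))
          = fun i => X i - Y i := by
        funext i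
        have h1 : List.ofFn ((Equiv.funUnique (Fin 1) (Fin n)).symm i) = [i] := by
          simp [Equiv.funUnique]
        rw [h1]
        have h2 : wordProd X [i] = X i := by simp [wordProd]
        have h3 : wordProd Y [i] = Y i := by simp [wordProd]
        rw [h2, h3]
      rw [hfun]
      simp
  | succ k hk ih =>
      rw [← norm_colOp_reindex (Fin.consEquiv (fun _ => Fin n))]
      have key : ∀ A B P Q : H →L[ℂ] H,
          A ∘L P - B ∘L Q = ((A - B) ∘L Q) + (A ∘L (P - Q)) := by
        intro A B P Q
        simp only [← ContinuousLinearMap.mul_def]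
        noncomm_ring
      have hfun : (fun p : Fin n × (Fin k → Fin n) =>
            wordProd X (List.ofFn ((Fin.consEquiv (fun _ => Fin n)) p))
            - wordProd Y (List.ofFn ((Fin.consEquiv (fun _ => Fin n)) p)))
          = fun p => (((X p.1 - Y p.1) ∘L wordProd Y (List.ofFn p.2))
              + (X p.1 ∘L (wordProd X (List.ofFn p.2) - wordProd Y (List.ofFn p.2)))) := by
        funext p
        rw [ofFn_consEquiv, wordProd_cons, wordProd_cons, key]
      rw [hfun, colOp_add]
      set d := ‖colOp (fun i => X i - Y i)‖ with hd
      have hd0 : 0 ≤ d := by rw [hd]; positivity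
      have hA : ‖colOp (fun p : Fin n × (Fin k → Fin n) =>
            (X p.1 - Y p.1) ∘L wordProd Y (List.ofFn p.2))‖ ≤ d * r ^ k :=
        (norm_colOp_mul_le (fun i => X i - Y i)
            (fun w : Fin k → Fin n => wordProd Y (List.ofFn w))).trans
          (mul_le_mul_of_nonneg_left (norm_colOp_word_le Y hr hY k) hd0)
      have hB : ‖colOp (fun p : Fin n × (Fin k → Fin n) =>
            X p.1 ∘L (wordProd X (List.ofFn p.2) - wordProd Y (List.ofFn p.2)))‖
          ≤ r * ((k : ℝ) * r ^ (k - 1) * d) :=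
        (norm_colOp_mul_le X (fun w : Fin k → Fin n =>
            wordProd X (List.ofFn w) - wordProd Y (List.ofFn w))).trans
          (mul_le_mul hX ih (norm_nonneg (colOp (fun w : Fin k → Fin n =>
            wordProd X (List.ofFn w) - wordProd Y (List.ofFn w)))) hr)
      have hk1 : k - 1 + 1 = k := Nat.succ_pred_eq_of_pos hk
      have hrk : r * r ^ (k - 1) = r ^ k := by
        rw [← pow_succ', hk1]
      have hsum := norm_add_le (colOp (fun p : Fin n × (Fin k → Fin n) =>
              (X p.1 - Y p.1) ∘L wordProd Y (List.ofFn p.2)))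
            (colOp (fun p : Fin n × (Fin k → Fin n) =>
              X p.1 ∘L (wordProd X (List.ofFn p.2) - wordProd Y (List.ofFn p.2))))
      refine (hsum.trans (add_le_add hA hB)).trans_eq ?_
      rw [Nat.add_sub_cancel]
      push_cast
      rw [show r * ((k : ℝ) * r ^ (k - 1) * d) = (k : ℝ) * (r * r ^ (k - 1)) * d by ring, hrk]
      ring

end Words

/-- If `‖X‖_row ≤ r` and `‖Y‖_row ≤ r` then for every `k ≥ 1`,
`‖∑_{|α|=k} (X_α−Y_α)(X_α−Y_α)^*‖^{1/2} ≤ k r^{k-1} ‖∑_i (X_i−Y_i)(X_i−Y_i)^*‖^{1/2}`. -/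
theorem stmt_5 {n : ℕ} (hn : 0 < n)
    {H : Type*} [NormedAddCommGroup H] [InnerProductSpace ℂ H] [CompleteSpace H]
    (X Y : Fin n → H →L[ℂ] H) (r : ℝ) (hr : 0 ≤ r)
    (hX : rowNorm X ≤ r) (hY : rowNorm Y ≤ r) (k : ℕ) (hk : 1 ≤ k) :
    Real.sqrt ‖∑ w : Fin k → Fin n,
        (wordProd X (List.ofFn w) - wordProd Y (List.ofFn w)) ∘L
          ContinuousLinearMap.adjoint
            (wordProd X (List.ofFn w) - wordProd Y (List.ofFn w))‖ ≤
      (k : ℝ) * r ^ (k - 1) *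
        Real.sqrt ‖∑ i, (X i - Y i) ∘L ContinuousLinearMap.adjoint (X i - Y i)‖ := by
  have hX' : ‖colOp X‖ ≤ r := by rw [← norm_colOp]; exact hX
  have hY' : ‖colOp Y‖ ≤ r := by rw [← norm_colOp]; exact hY
  have hL : Real.sqrt ‖∑ w : Fin k → Fin n,
      (wordProd X (List.ofFn w) - wordProd Y (List.ofFn w)) ∘L
        ContinuousLinearMap.adjoint
          (wordProd X (List.ofFn w) - wordProd Y (List.ofFn w))‖
      = ‖colOp (fun w : Fin k → Fin n =>
          wordProd X (List.ofFn w) - wordProd Y (List.ofFn w))‖ :=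
    norm_colOp (fun w : Fin k → Fin n => wordProd X (List.ofFn w) - wordProd Y (List.ofFn w))
  have hR : Real.sqrt ‖∑ i, (X i - Y i) ∘L ContinuousLinearMap.adjoint (X i - Y i)‖
      = ‖colOp (fun i => X i - Y i)‖ := norm_colOp (fun i => X i - Y i)
  rw [hL, hR]
  exact norm_colOp_diff_le X Y hr hX' hY' k hk
end

section
/- The radius of convergence does not decrease under Hausdorff derivation: Let a : F_n^+ → ℂ, fix j ∈ {1,…,n}, and define b : F_n^+ → ℂ by b_β := ∑_{(u,v): uv = β} a_{u g_j v}, the sum over all |β|+1 factorizations of the word β as a product of two words u, v (these are the coefficients of the Hausdorff partial derivative ∂F/∂Z_j of the formal power series F with coefficients a). Then for every k ≥ 0, ∑_{|β|=k} |b_β|² ≤ (k+1)² ∑_{|α|=k+1} |a_α|²; consequently limsup_{k→∞}(∑_{|β|=k}|b_β|²)^{1/(2k)} ≤ limsup_{k→∞}(∑_{|α|=k}|a_α|²)^{1/(2k)}, i.e., the radius of convergence of ∂F/∂Z_j is at least the radius of convergence of F. -/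
open Filter MeasureTheory
open scoped ENNReal

variable {n : ℕ}

private lemma ofFn_get_cast {α : Type*} {m : ℕ} (l : List α) (h : l.length = m) :
    List.ofFn (fun i : Fin m => l.get (Fin.cast h.symm i)) = l := by
  subst h
  exact List.ofFn_get l

/-- Summing a nonnegative function over words of length `k` with `j` inserted at position `m`
is at most the full sum over words of length `k+1`. -/
private lemma insertSum_le {n k : ℕ} (j : Fin n) (m : ℕ) (hm : m ≤ k)
    (F : List (Fin n) → ℝ) (hF : ∀ l, 0 ≤ F l) :
    ∑ w : Fin k → Fin n, F ((List.ofFn w).take m ++ j :: (List.ofFn w).drop m)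
      ≤ ∑ w : Fin (k + 1) → Fin n, F (List.ofFn w) := by
  have hlen : ∀ w : Fin k → Fin n,
      ((List.ofFn w).take m ++ j :: (List.ofFn w).drop m).length = k + 1 := by
    intro w
    simp [List.length_take, List.length_drop]
    omega
  set φ : (Fin k → Fin n) → (Fin (k + 1) → Fin n) :=
    fun w i => ((List.ofFn w).take m ++ j :: (List.ofFn w).drop m).get
      (Fin.cast (hlen w).symm i) with hφ
  have hofn : ∀ w, List.ofFn (φ w) = (List.ofFn w).take m ++ j :: (List.ofFn w).drop m :=
    fun w => ofFn_get_cast _ (hlen w)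
  have hinj : Function.Injective φ := by
    intro w w' h
    have he : (List.ofFn w).take m ++ j :: (List.ofFn w).drop m
        = (List.ofFn w').take m ++ j :: (List.ofFn w').drop m := by
      rw [← hofn w, ← hofn w', h]
    have hlt : ((List.ofFn w).take m).length = ((List.ofFn w').take m).length := by
      simp
    obtain ⟨h1, h2⟩ := List.append_inj he hlt
    have h3 : (List.ofFn w).drop m = (List.ofFn w').drop m := by
      injection h2
    apply List.ofFn_injective
    rw [← List.take_append_drop m (List.ofFn w), ← List.take_append_drop m (List.ofFn w'),
      h1, h3]
  calc ∑ w : Fin k → Fin n, F ((List.ofFn w).take m ++ j :: (List.ofFn w).drop m)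
      = ∑ w : Fin k → Fin n, F (List.ofFn (φ w)) := by
        refine Finset.sum_congr rfl fun w _ => ?_
        rw [hofn w]
    _ = ∑ w' ∈ Finset.univ.image φ, F (List.ofFn w') := by
        rw [Finset.sum_image (f := fun w' => F (List.ofFn w')) (fun x _ y _ h => hinj h)]
    _ ≤ ∑ w' : Fin (k + 1) → Fin n, F (List.ofFn w') :=
        Finset.sum_le_sum_of_subset_of_nonneg (Finset.subset_univ _) (fun i _ _ => hF _)

/-- **The radius of convergence does not decrease under Hausdorff derivation.**
If `b_β = ∑_{uv = β} a_{u g_j v}` (the coefficients of `∂F/∂Z_j`), then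
`∑_{|β|=k}|b_β|² ≤ (k+1)² ∑_{|α|=k+1}|a_α|²` for every `k`, and consequently
`limsup_k (∑_{|β|=k}|b_β|²)^{1/(2k)} ≤ limsup_k (∑_{|α|=k}|a_α|²)^{1/(2k)}`. -/
theorem stmt_9 {n : ℕ} (hn : 0 < n) (a : List (Fin n) → ℂ) (j : Fin n)
    (b : List (Fin n) → ℂ)
    (hb : ∀ β : List (Fin n),
      b β = ∑ m ∈ Finset.range (β.length + 1), a (β.take m ++ j :: β.drop m)) :
    (∀ k : ℕ, ∑ w : Fin k → Fin n, ‖b (List.ofFn w)‖ ^ 2 ≤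
        ((k : ℝ) + 1) ^ 2 * ∑ w : Fin (k + 1) → Fin n, ‖a (List.ofFn w)‖ ^ 2) ∧
    radiusInv b ≤ radiusInv a := by
  have key : ∀ k : ℕ, ∑ w : Fin k → Fin n, ‖b (List.ofFn w)‖ ^ 2 ≤
      ((k : ℝ) + 1) ^ 2 * ∑ w : Fin (k + 1) → Fin n, ‖a (List.ofFn w)‖ ^ 2 := by
    intro k
    have step1 : ∀ w : Fin k → Fin n, ‖b (List.ofFn w)‖ ^ 2 ≤
        ((k : ℝ) + 1) * ∑ m ∈ Finset.range (k + 1),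
          ‖a ((List.ofFn w).take m ++ j :: (List.ofFn w).drop m)‖ ^ 2 := by
      intro w
      rw [hb, List.length_ofFn]
      calc ‖∑ m ∈ Finset.range (k + 1),
              a ((List.ofFn w).take m ++ j :: (List.ofFn w).drop m)‖ ^ 2
          ≤ (∑ m ∈ Finset.range (k + 1),
              ‖a ((List.ofFn w).take m ++ j :: (List.ofFn w).drop m)‖) ^ 2 := by
            exact pow_le_pow_left₀ (norm_nonneg _) (norm_sum_le _ _) 2
        _ ≤ ((Finset.range (k + 1)).card : ℝ) * ∑ m ∈ Finset.range (k + 1),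
              ‖a ((List.ofFn w).take m ++ j :: (List.ofFn w).drop m)‖ ^ 2 :=
            sq_sum_le_card_mul_sum_sq
        _ = ((k : ℝ) + 1) * ∑ m ∈ Finset.range (k + 1),
              ‖a ((List.ofFn w).take m ++ j :: (List.ofFn w).drop m)‖ ^ 2 := by
            norm_num
    calc ∑ w : Fin k → Fin n, ‖b (List.ofFn w)‖ ^ 2
        ≤ ∑ w : Fin k → Fin n, ((k : ℝ) + 1) * ∑ m ∈ Finset.range (k + 1),
            ‖a ((List.ofFn w).take m ++ j :: (List.ofFn w).drop m)‖ ^ 2 :=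
          Finset.sum_le_sum fun w _ => step1 w
      _ = ((k : ℝ) + 1) * ∑ m ∈ Finset.range (k + 1), ∑ w : Fin k → Fin n,
            ‖a ((List.ofFn w).take m ++ j :: (List.ofFn w).drop m)‖ ^ 2 := by
          rw [← Finset.mul_sum, Finset.sum_comm]
      _ ≤ ((k : ℝ) + 1) * ∑ m ∈ Finset.range (k + 1),
            ∑ w : Fin (k + 1) → Fin n, ‖a (List.ofFn w)‖ ^ 2 := by
          refine mul_le_mul_of_nonneg_left (Finset.sum_le_sum fun m hm => ?_) (by positivity)
          exact insertSum_le j m (Nat.lt_succ_iff.mp (Finset.mem_range.mp hm))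
            (fun l => ‖a l‖ ^ 2) (fun l => sq_nonneg _)
      _ = ((k : ℝ) + 1) ^ 2 * ∑ w : Fin (k + 1) → Fin n, ‖a (List.ofFn w)‖ ^ 2 := by
          rw [Finset.sum_const, Finset.card_range, nsmul_eq_mul]
          push_cast
          ring
  refine ⟨key, ?_⟩
  -- level-coefficient bound
  have hcoef : ∀ k : ℕ, lvlCoef b k ≤ ((k : ℝ) + 1) * lvlCoef a (k + 1) := by
    intro k
    unfold lvlCoef
    calc Real.sqrt (∑ w : Fin k → Fin n, ‖b (List.ofFn w)‖ ^ 2)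
        ≤ Real.sqrt (((k : ℝ) + 1) ^ 2 * ∑ w : Fin (k + 1) → Fin n, ‖a (List.ofFn w)‖ ^ 2) :=
          Real.sqrt_le_sqrt (key k)
      _ = ((k : ℝ) + 1) * Real.sqrt (∑ w : Fin (k + 1) → Fin n, ‖a (List.ofFn w)‖ ^ 2) := by
          rw [Real.sqrt_mul (by positivity), Real.sqrt_sq (by positivity)]
  have hbnn : ∀ k, (0:ℝ) ≤ lvlCoef b k := fun k => Real.sqrt_nonneg _
  have hann : ∀ k, (0:ℝ) ≤ lvlCoef a k := fun k => Real.sqrt_nonneg _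
  refine le_of_forall_gt_imp_ge_of_dense fun M hM => ?_
  obtain ⟨M', hLM', hM'M⟩ := exists_between hM
  have hM'top : M' ≠ ⊤ := (hM'M.trans_le le_top).ne
  have hM'pos : 0 < M' := zero_le.trans_lt hLM'
  set r := M'.toReal with hrdef
  have hrpos : 0 < r := ENNReal.toReal_pos hM'pos.ne' hM'top
  have hM'eq : M' = ENNReal.ofReal r := (ENNReal.ofReal_toReal hM'top).symm
  -- eventual bound on the coefficients of a
  have hevv : ∀ᶠ k in atTop,
      ENNReal.ofReal (lvlCoef a k ^ (1 / (2 * (k : ℝ)))) < M' := by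
    unfold radiusInv at hLM'
    exact Filter.eventually_lt_of_limsup_lt hLM'
  have hevA : ∀ᶠ k in atTop, lvlCoef a (k + 1) ≤ r ^ (2 * ((k : ℝ) + 1)) := by
    filter_upwards [(Filter.tendsto_add_atTop_nat 1).eventually hevv] with k hk
    rw [hM'eq, ENNReal.ofReal_lt_ofReal_iff hrpos] at hk
    have hcast : ((k + 1 : ℕ) : ℝ) = (k : ℝ) + 1 := by push_cast; ring
    rw [hcast] at hk
    have hxnn : (0:ℝ) ≤ lvlCoef a (k + 1) := hann _
    have hne : (2 * ((k : ℝ) + 1)) ≠ 0 := by positivity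
    have hx : lvlCoef a (k + 1)
        = (lvlCoef a (k + 1) ^ (1 / (2 * ((k : ℝ) + 1)))) ^ (2 * ((k : ℝ) + 1)) := by
      rw [← Real.rpow_mul hxnn, one_div, inv_mul_cancel₀ hne, Real.rpow_one]
    rw [hx]
    exact Real.rpow_le_rpow (Real.rpow_nonneg hxnn _) hk.le (by positivity)
  -- eventual bound on the terms of the limsup for b
  set f : ℕ → ℝ := fun k =>
    (((k : ℝ) + 1) * r ^ (2 * ((k : ℝ) + 1))) ^ (1 / (2 * (k : ℝ))) with hfdef
  have hevB : ∀ᶠ k in atTop,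
      ENNReal.ofReal (lvlCoef b k ^ (1 / (2 * (k : ℝ)))) ≤ ENNReal.ofReal (f k) := by
    filter_upwards [hevA] with k hA
    apply ENNReal.ofReal_le_ofReal
    apply Real.rpow_le_rpow (hbnn k) _ (by positivity)
    calc lvlCoef b k ≤ ((k : ℝ) + 1) * lvlCoef a (k + 1) := hcoef k
      _ ≤ ((k : ℝ) + 1) * r ^ (2 * ((k : ℝ) + 1)) := by
          exact mul_le_mul_of_nonneg_left hA (by positivity)
  -- the comparison sequence tends to r
  set g : ℕ → ℝ := fun k =>
    Real.log ((k : ℝ) + 1) / (2 * (k : ℝ)) + (1 + 1 / (k : ℝ)) * Real.log r with hgdef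
  have hg : Tendsto g atTop (nhds (Real.log r)) := by
    have t1 : Tendsto (fun k : ℕ => Real.log ((k : ℝ) + 1) / (2 * (k : ℝ))) atTop (nhds 0) := by
      have hc : Tendsto (fun k : ℕ => (k : ℝ) + 1) atTop atTop :=
        tendsto_atTop_add_const_right _ 1 tendsto_natCast_atTop_atTop
      have := (Real.tendsto_pow_log_div_mul_add_atTop 2 (-2) 1 two_ne_zero).comp hc
      refine this.congr fun k => ?_
      simp only [Function.comp_apply, pow_one]
      ring_nf
    have t2 : Tendsto (fun k : ℕ => (1 + 1 / (k : ℝ)) * Real.log r) atTop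
        (nhds ((1 + 0) * Real.log r)) :=
      (tendsto_const_nhds.add tendsto_one_div_atTop_nhds_zero_nat).mul_const _
    have h := t1.add t2
    have he : (0:ℝ) + (1 + 0) * Real.log r = Real.log r := by ring
    rw [he] at h
    exact h
  have hfg : f =ᶠ[atTop] fun k => Real.exp (g k) := by
    filter_upwards [eventually_ge_atTop 1] with k hk1
    have hkpos : (0:ℝ) < (k : ℝ) := by exact_mod_cast hk1
    have hbase : (0:ℝ) < ((k : ℝ) + 1) * r ^ (2 * ((k : ℝ) + 1)) := by positivity
    rw [hfdef]
    simp only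
    rw [Real.rpow_def_of_pos hbase, Real.log_mul (by positivity) (by positivity),
      Real.log_rpow hrpos, hgdef]
    congr 1
    field_simp
  have hf : Tendsto f atTop (nhds r) := by
    have : Tendsto (fun k => Real.exp (g k)) atTop (nhds (Real.exp (Real.log r))) :=
      (Real.continuous_exp.continuousAt.tendsto).comp hg
    rw [Real.exp_log hrpos] at this
    exact this.congr' hfg.symm
  have hlim : Tendsto (fun k => ENNReal.ofReal (f k)) atTop (nhds M') := by
    rw [hM'eq]
    exact (ENNReal.continuous_ofReal.continuousAt.tendsto).comp hf
  calc radiusInv b ≤ Filter.limsup (fun k => ENNReal.ofReal (f k)) atTop := by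
        unfold radiusInv
        exact Filter.limsup_le_limsup hevB
    _ = M' := hlim.limsup_eq
    _ ≤ M := hM'M.le
end

section
/- Unitary invariance: Let U = [λ_{ij}] be an n×n unitary matrix over ℂ, let T = (T_1,…,T_n) be an n-tuple of bounded operators on a complex Hilbert space H, and define the n-tuple B = (B_1,…,B_n) by B_j := ∑_{i=1}^n λ_{ij} T_i. Then for every k ≥ 1, ∑_{|α|=k} B_α B_α* = ∑_{|α|=k} T_α T_α*. In particular ‖B‖_row = ‖T‖_row and the joint spectral radii coincide: r(B) = r(T). -/
open Filter MeasureTheory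
open scoped ENNReal

variable {n : ℕ}

open ContinuousLinearMap in
theorem aux_key16 {n : ℕ}
    {H : Type*} [NormedAddCommGroup H] [InnerProductSpace ℂ H] [CompleteSpace H]
    (T : Fin n → H →L[ℂ] H)
    (U : Matrix (Fin n) (Fin n) ℂ) (hU : U ∈ Matrix.unitaryGroup (Fin n) ℂ)
    (B : Fin n → H →L[ℂ] H) (hB : ∀ j, B j = ∑ i, U i j • T i)
    (S : H →L[ℂ] H) :
    ∑ j, B j * S * adjoint (B j) = ∑ i, T i * S * adjoint (T i) := by
  have hadj : ∀ j, adjoint (B j) = ∑ i, (starRingEnd ℂ (U i j)) • adjoint (T i) := by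
    intro j
    rw [hB, map_sum]
    congr 1
    ext i
    simp [map_smulₛₗ]
  have hent : ∀ i i', ∑ j, U i j * starRingEnd ℂ (U i' j) = if i = i' then 1 else 0 := by
    intro i i'
    have := congrFun (congrFun hU.2 i) i'
    simpa [Matrix.mul_apply, Matrix.one_apply, Matrix.conjTranspose_apply] using this
  calc ∑ j, B j * S * adjoint (B j)
      = ∑ j, ∑ i, ∑ i', (U i j * starRingEnd ℂ (U i' j)) •
          (T i * S * adjoint (T i')) := by
        refine Finset.sum_congr rfl fun j _ => ?_
        rw [hadj j, hB]
        rw [Finset.sum_mul, Finset.sum_mul]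
        refine Finset.sum_congr rfl fun i _ => ?_
        rw [Finset.mul_sum]
        refine Finset.sum_congr rfl fun i' _ => ?_
        rw [smul_mul_assoc, smul_mul_assoc, mul_smul_comm, smul_smul]
    _ = ∑ i, ∑ i', (∑ j, U i j * starRingEnd ℂ (U i' j)) • (T i * S * adjoint (T i')) := by
        rw [Finset.sum_comm]
        refine Finset.sum_congr rfl fun i _ => ?_
        rw [Finset.sum_comm]
        refine Finset.sum_congr rfl fun i' _ => ?_
        rw [Finset.sum_smul]
    _ = ∑ i, T i * S * adjoint (T i) := by
        refine Finset.sum_congr rfl fun i _ => ?_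
        rw [Finset.sum_eq_single i]
        · rw [hent, if_pos rfl, one_smul]
        · intro i' _ h; rw [hent, if_neg (Ne.symm h), zero_smul]
        · intro h; exact absurd (Finset.mem_univ i) h

theorem aux_cons16 {n : ℕ} {H : Type*} [NormedAddCommGroup H] [NormedSpace ℂ H]
    (X : Fin n → H →L[ℂ] H) (i : Fin n) (l : List (Fin n)) :
    wordProd X (i :: l) = X i * wordProd X l := by
  simp [wordProd]

open ContinuousLinearMap in
theorem aux_lvl16 {n : ℕ} {H : Type*} [NormedAddCommGroup H] [InnerProductSpace ℂ H]
    [CompleteSpace H] (X : Fin n → H →L[ℂ] H) (k : ℕ) :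
    ∑ w : Fin (k+1) → Fin n, wordProd X (List.ofFn w) * adjoint (wordProd X (List.ofFn w))
      = ∑ i, X i * (∑ w : Fin k → Fin n,
          wordProd X (List.ofFn w) * adjoint (wordProd X (List.ofFn w))) * adjoint (X i) := by
  rw [← (Fin.consEquiv (fun _ : Fin (k+1) => Fin n)).sum_comp
    (fun w => wordProd X (List.ofFn w) * adjoint (wordProd X (List.ofFn w)))]
  rw [Fintype.sum_prod_type]
  refine Finset.sum_congr rfl fun i _ => ?_
  rw [Finset.mul_sum, Finset.sum_mul]
  refine Finset.sum_congr rfl fun w _ => ?_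
  have h1 : List.ofFn ((Fin.consEquiv (fun _ : Fin (k+1) => Fin n)) (i, w)) = i :: List.ofFn w := by
    simp [Fin.consEquiv, List.ofFn_succ]
  rw [h1, aux_cons16]
  have h2 : adjoint (X i * wordProd X (List.ofFn w))
      = adjoint (wordProd X (List.ofFn w)) * adjoint (X i) :=
    adjoint_comp (X i) (wordProd X (List.ofFn w))
  rw [h2]
  noncomm_ring

open ContinuousLinearMap in
theorem aux_main16 {n : ℕ}
    {H : Type*} [NormedAddCommGroup H] [InnerProductSpace ℂ H] [CompleteSpace H]
    (T : Fin n → H →L[ℂ] H)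
    (U : Matrix (Fin n) (Fin n) ℂ) (hU : U ∈ Matrix.unitaryGroup (Fin n) ℂ)
    (B : Fin n → H →L[ℂ] H) (hB : ∀ j, B j = ∑ i, U i j • T i) (k : ℕ) :
    ∑ w : Fin k → Fin n, wordProd B (List.ofFn w) * adjoint (wordProd B (List.ofFn w))
      = ∑ w : Fin k → Fin n,
          wordProd T (List.ofFn w) * adjoint (wordProd T (List.ofFn w)) := by
  induction k with
  | zero => rfl
  | succ k ih =>
      rw [aux_lvl16, aux_lvl16, ih]
      exact aux_key16 T U hU B hB _

/-- **Unitary invariance.** If `U = [λ_{ij}]` is an `n×n` unitary matrix and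
`B_j = ∑_i λ_{ij} T_i`, then `∑_{|α|=k} B_α B_α^* = ∑_{|α|=k} T_α T_α^*` for every
`k ≥ 1`; in particular `‖B‖_row = ‖T‖_row` and `r(B) = r(T)`. -/

theorem stmt_16 {n : ℕ} (hn : 0 < n)
    {H : Type*} [NormedAddCommGroup H] [InnerProductSpace ℂ H] [CompleteSpace H]
    (T : Fin n → H →L[ℂ] H)
    (U : Matrix (Fin n) (Fin n) ℂ) (hU : U ∈ Matrix.unitaryGroup (Fin n) ℂ)
    (B : Fin n → H →L[ℂ] H) (hB : ∀ j, B j = ∑ i, U i j • T i) :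
    (∀ k : ℕ, 1 ≤ k →
      ∑ w : Fin k → Fin n, wordProd B (List.ofFn w) ∘L
          ContinuousLinearMap.adjoint (wordProd B (List.ofFn w)) =
        ∑ w : Fin k → Fin n, wordProd T (List.ofFn w) ∘L
          ContinuousLinearMap.adjoint (wordProd T (List.ofFn w))) ∧
    rowNorm B = rowNorm T ∧ jsr B = jsr T := by
  have hmul : ∀ (A C : H →L[ℂ] H), A ∘L C = A * C := fun _ _ => rfl
  have hmain := aux_main16 T U hU B hB
  refine ⟨fun k _ => by simp only [hmul]; exact hmain k, ?_, ?_⟩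
  · unfold rowNorm
    congr 2
    have := aux_key16 T U hU B hB 1
    simpa [hmul] using this
  · unfold jsr
    congr 1
    funext k
    simp only [hmul, hmain k]
end

section
/- Weierstrass-type theorem for free holomorphic functions: Let S_1,…,S_n be isometries with pairwise orthogonal ranges and vacuum vector ξ on a complex Hilbert space E. For each m ∈ ℕ let a^{(m)} : F_n^+ → ℂ satisfy limsup_{k→∞}(∑_{|α|=k}|a^{(m)}_α|²)^{1/(2k)} ≤ 1, and for 0 ≤ r < 1 write F_m(rS) := ∑_{k=0}^∞ r^k ∑_{|α|=k} a^{(m)}_α S_α (these series converge in operator norm). Suppose that for every r ∈ [0,1) the sequence (F_m(rS))_{m∈ℕ} converges in the operator norm of B(E). Then: (1) for every word α the limit a_α := lim_{m→∞} a^{(m)}_α exists in ℂ; (2) the limit coefficients satisfy limsup_{k→∞}(∑_{|α|=k}|a_α|²)^{1/(2k)} ≤ 1; and (3) for every r ∈ [0,1), F_m(rS) converges in operator norm, as m → ∞, to F(rS) := ∑_{k=0}^∞ r^k ∑_{|α|=k} a_α S_α. -/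
open Filter MeasureTheory
open scoped ENNReal

variable {n : ℕ}

set_option linter.unusedSectionVars false
set_option linter.unusedVariables false
set_option maxHeartbeats 1000000
open ContinuousLinearMap
open scoped Topology

section aux

variable {E : Type*} [NormedAddCommGroup E] [InnerProductSpace ℂ E] [CompleteSpace E]

local notation "⟪" x ", " y "⟫" => @inner ℂ _ _ x y

lemma wordProd_nil (S : Fin n → E →L[ℂ] E) : wordProd S ([] : List (Fin n)) = 1 := rfl

lemma wordProd_cons_s17 (S : Fin n → E →L[ℂ] E) (i : Fin n) (α : List (Fin n)) :
    wordProd S (i :: α) = S i ∘L wordProd S α := by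
  simp [wordProd, List.prod_cons]; rfl

lemma adjoint_wordProd_comp (S : Fin n → E →L[ℂ] E)
    (hS : ∀ i j, adjoint (S i) ∘L S j = if i = j then 1 else 0) :
    ∀ α β : List (Fin n), α.length = β.length →
      adjoint (wordProd S α) ∘L wordProd S β = if α = β then 1 else 0 := by
  intro α
  induction α with
  | nil => intro β hβ; cases β with
    | nil =>
      simp only [wordProd_nil, if_pos rfl, ContinuousLinearMap.one_def, ContinuousLinearMap.adjoint_id]
      ext x; rfl
    | cons j β' => simp at hβ
  | cons i α' ih =>
    intro β hβ
    cases β with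
    | nil => simp at hβ
    | cons j β' =>
      simp only [List.length_cons, Nat.succ_inj] at hβ
      rw [wordProd_cons_s17, wordProd_cons_s17, adjoint_comp]
      have : (adjoint (wordProd S α') ∘L adjoint (S i)) ∘L (S j ∘L wordProd S β')
          = adjoint (wordProd S α') ∘L ((adjoint (S i) ∘L S j) ∘L wordProd S β') := by
        ext x; rfl
      rw [this, hS i j]
      by_cases hij : i = j
      · subst hij
        rw [if_pos rfl, one_def, id_comp, ih β' hβ]
        by_cases h' : α' = β'
        · rw [if_pos h', if_pos (by rw [h'])]; rfl
        · rw [if_neg h', if_neg (by simp [h'])]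
      · rw [if_neg hij, zero_comp, comp_zero,
          if_neg (by simp [hij])]

variable (S : Fin n → E →L[ℂ] E)
  (hS : ∀ i j, adjoint (S i) ∘L S j = if i = j then 1 else 0)
  (ξ : E) (hξ : ‖ξ‖ = 1) (hvac : ∀ i, adjoint (S i) ξ = 0)

include hS ξ hξ hvac in
lemma inner_word_word :
    ∀ α β : List (Fin n), ⟪wordProd S α ξ, wordProd S β ξ⟫ = if α = β then 1 else 0 := by
  have hξ2 : ⟪ξ, ξ⟫ = 1 := by
    rw [inner_self_eq_norm_sq_to_K, hξ]; norm_num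
  intro α
  induction α with
  | nil =>
    intro β
    cases β with
    | nil => simpa [wordProd_nil] using hξ2
    | cons j β' =>
      rw [wordProd_nil, wordProd_cons_s17, if_neg (by simp)]
      simp only [ContinuousLinearMap.one_apply, ContinuousLinearMap.comp_apply]
      rw [← ContinuousLinearMap.adjoint_inner_left, hvac j, inner_zero_left]
  | cons i α' ih =>
    intro β
    cases β with
    | nil =>
      rw [wordProd_cons_s17, wordProd_nil, if_neg (by simp)]
      simp only [ContinuousLinearMap.one_apply, ContinuousLinearMap.comp_apply]
      rw [← ContinuousLinearMap.adjoint_inner_right, hvac i, inner_zero_right]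
    | cons j β' =>
      rw [wordProd_cons_s17, wordProd_cons_s17]
      simp only [ContinuousLinearMap.comp_apply]
      rw [← ContinuousLinearMap.adjoint_inner_right, ← ContinuousLinearMap.comp_apply,
        hS i j]
      by_cases hij : i = j
      · subst hij
        rw [if_pos rfl, ContinuousLinearMap.one_apply, ih β']
        by_cases h' : α' = β'
        · rw [if_pos h', if_pos (by rw [h'])]
        · rw [if_neg h', if_neg (by simp [h'])]
      · rw [if_neg hij, ContinuousLinearMap.zero_apply, inner_zero_right,
          if_neg (by simp [hij])]

include hS in
lemma inner_word_word_fin {k : ℕ} (w w' : Fin k → Fin n) (x : E) :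
    ⟪wordProd S (List.ofFn w) x, wordProd S (List.ofFn w') x⟫
      = if w = w' then ⟪x, x⟫ else 0 := by
  rw [← ContinuousLinearMap.adjoint_inner_right, ← ContinuousLinearMap.comp_apply,
    adjoint_wordProd_comp S hS _ _ (by simp)]
  by_cases h : w = w'
  · rw [if_pos (by rw [h]), if_pos h, ContinuousLinearMap.one_apply]
  · rw [if_neg (fun hh => h (List.ofFn_inj.mp hh)), if_neg h,
      ContinuousLinearMap.zero_apply, inner_zero_right]

include hS in
lemma lvlOp_apply_norm (c : List (Fin n) → ℂ) (k : ℕ) (x : E) :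
    ‖lvlOp c S k x‖ = lvlCoef c k * ‖x‖ := by
  classical
  have h : ⟪lvlOp c S k x, lvlOp c S k x⟫
      = ∑ w : Fin k → Fin n, ((‖c (List.ofFn w)‖ : ℂ)) ^ 2 * ⟪x, x⟫ := by
    simp only [lvlOp, ContinuousLinearMap.sum_apply, ContinuousLinearMap.smul_apply]
    rw [sum_inner]
    refine Finset.sum_congr rfl fun w _ => ?_
    rw [inner_smul_left, inner_sum]
    have hterm : ∀ w' ∈ (Finset.univ : Finset (Fin k → Fin n)),
        ⟪wordProd S (List.ofFn w) x, c (List.ofFn w') • wordProd S (List.ofFn w') x⟫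
          = if w = w' then c (List.ofFn w') * ⟪x, x⟫ else 0 := by
      intro w' _
      rw [inner_smul_right, inner_word_word_fin S hS w w' x]
      by_cases h : w = w' <;> simp [h]
    rw [Finset.sum_congr rfl hterm, Finset.sum_ite_eq, if_pos (Finset.mem_univ w),
      ← mul_assoc, RCLike.conj_mul]
    norm_cast
  have hy : (‖lvlOp c S k x‖ ^ 2 : ℝ)
      = ∑ w : Fin k → Fin n, ‖c (List.ofFn w)‖ ^ 2 * ‖x‖ ^ 2 := by
    have h2 := h
    rw [inner_self_eq_norm_sq_to_K, inner_self_eq_norm_sq_to_K] at h2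
    have h2' : ((‖lvlOp c S k x‖ ^ 2 : ℝ) : ℂ)
        = ((∑ w : Fin k → Fin n, ‖c (List.ofFn w)‖ ^ 2 * ‖x‖ ^ 2 : ℝ) : ℂ) := by
      push_cast
      exact h2
    exact_mod_cast h2'
  have hnn : (0:ℝ) ≤ ∑ w : Fin k → Fin n, ‖c (List.ofFn w)‖ ^ 2 :=
    Finset.sum_nonneg fun w _ => sq_nonneg _
  calc ‖lvlOp c S k x‖ = Real.sqrt (‖lvlOp c S k x‖ ^ 2) :=
        (Real.sqrt_sq (norm_nonneg _)).symm
    _ = Real.sqrt ((∑ w : Fin k → Fin n, ‖c (List.ofFn w)‖ ^ 2) * ‖x‖ ^ 2) := by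
        rw [hy, Finset.sum_mul]
    _ = lvlCoef c k * ‖x‖ := by
        rw [Real.sqrt_mul hnn, Real.sqrt_sq (norm_nonneg x)]; rfl

lemma lvlCoef_nonneg (c : List (Fin n) → ℂ) (k : ℕ) : 0 ≤ lvlCoef c k :=
  Real.sqrt_nonneg _

include hS in
lemma lvlOp_opNorm_le (c : List (Fin n) → ℂ) (k : ℕ) : ‖lvlOp c S k‖ ≤ lvlCoef c k :=
  ContinuousLinearMap.opNorm_le_bound _ (lvlCoef_nonneg c k)
    fun x => le_of_eq (lvlOp_apply_norm S hS c k x)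

include hS hξ hvac in
lemma inner_word_lvlOp (c : List (Fin n) → ℂ) (k : ℕ) (α : List (Fin n)) :
    ⟪wordProd S α ξ, lvlOp c S k ξ⟫ = if α.length = k then c α else 0 := by
  classical
  rw [lvlOp, ContinuousLinearMap.sum_apply, inner_sum]
  have hterm : ∀ w ∈ (Finset.univ : Finset (Fin k → Fin n)),
      ⟪wordProd S α ξ, (c (List.ofFn w) • wordProd S (List.ofFn w)) ξ⟫
        = if α = List.ofFn w then c α else 0 := by
    intro w _
    rw [ContinuousLinearMap.smul_apply, inner_smul_right,
      inner_word_word S hS ξ hξ hvac α (List.ofFn w)]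
    by_cases h : α = List.ofFn w <;> simp [h]
  rw [Finset.sum_congr rfl hterm]
  by_cases hk : α.length = k
  · set w₀ : Fin k → Fin n := fun i => α.get (Fin.cast hk.symm i) with hw₀def
    have hw₀ : List.ofFn w₀ = α := by
      apply List.ext_getElem (by simp [hk])
      intro i h1 h2
      simp [hw₀def]
    rw [Finset.sum_eq_single w₀]
    · rw [if_pos hw₀.symm, if_pos hk]
    · intro w _ hw
      rw [if_neg]
      intro hα
      exact hw (List.ofFn_inj.mp (by rw [← hα, hw₀]))
    · intro h; exact absurd (Finset.mem_univ w₀) h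
  · rw [if_neg hk]
    refine Finset.sum_eq_zero fun w _ => ?_
    rw [if_neg]
    intro hα
    exact hk (by rw [hα, List.length_ofFn])

include hS hξ hvac in
lemma inner_word_hasSum (c : List (Fin n) → ℂ) (r : ℝ) {F : E →L[ℂ] E}
    (hF : HasSum (fun k => ((r : ℂ) ^ k) • lvlOp c S k) F) (α : List (Fin n)) :
    ⟪wordProd S α ξ, F ξ⟫ = (r : ℂ) ^ α.length * c α := by
  have h1 : HasSum (fun k => ((r : ℂ) ^ k) • lvlOp c S k ξ) (F ξ) := by
    have := hF.mapL (ContinuousLinearMap.apply ℂ E ξ)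
    simpa using this
  have h2 : HasSum (fun k => (r : ℂ) ^ k * ⟪wordProd S α ξ, lvlOp c S k ξ⟫)
      ⟪wordProd S α ξ, F ξ⟫ := by
    have := h1.mapL (innerSL ℂ (wordProd S α ξ))
    simpa using this
  have h3 : (fun k => (r : ℂ) ^ k * ⟪wordProd S α ξ, lvlOp c S k ξ⟫)
      = fun k => if k = α.length then (r : ℂ) ^ α.length * c α else 0 := by
    funext k
    rw [inner_word_lvlOp S hS ξ hξ hvac c k α]
    by_cases h : α.length = k
    · rw [if_pos h, if_pos h.symm, ← h]
    · rw [if_neg h, if_neg (fun hh => h hh.symm), mul_zero]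
  rw [h3] at h2
  exact h2.unique (hasSum_ite_eq α.length _)

include hS hξ hvac in
lemma bessel_bound (c : List (Fin n) → ℂ) (r : ℝ) (hr : 0 ≤ r) {F : E →L[ℂ] E}
    (hF : HasSum (fun k => ((r : ℂ) ^ k) • lvlOp c S k) F) (k : ℕ) :
    lvlCoef c k * r ^ k ≤ ‖F‖ := by
  have horth : Orthonormal ℂ (fun w : Fin k → Fin n => wordProd S (List.ofFn w) ξ) := by
    rw [orthonormal_iff_ite]
    intro w w'
    rw [inner_word_word S hS ξ hξ hvac]
    by_cases h : w = w'
    · rw [if_pos (by rw [h]), if_pos h]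
    · rw [if_neg (fun hh => h (List.ofFn_inj.mp hh)), if_neg h]
  have hb := horth.sum_inner_products_le (F ξ) (s := Finset.univ)
  have hval : ∀ w : Fin k → Fin n,
      ‖⟪wordProd S (List.ofFn w) ξ, F ξ⟫‖ ^ 2 = (r ^ k) ^ 2 * ‖c (List.ofFn w)‖ ^ 2 := by
    intro w
    rw [inner_word_hasSum S hS ξ hξ hvac c r hF (List.ofFn w), norm_mul, mul_pow,
      List.length_ofFn, norm_pow, Complex.norm_real, Real.norm_eq_abs, abs_of_nonneg hr]
  have hsum : (r ^ k) ^ 2 * (∑ w : Fin k → Fin n, ‖c (List.ofFn w)‖ ^ 2) ≤ ‖F ξ‖ ^ 2 := by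
    rw [Finset.mul_sum]
    calc ∑ w : Fin k → Fin n, (r ^ k) ^ 2 * ‖c (List.ofFn w)‖ ^ 2
        = ∑ w : Fin k → Fin n, ‖⟪wordProd S (List.ofFn w) ξ, F ξ⟫‖ ^ 2 :=
          Finset.sum_congr rfl fun w _ => (hval w).symm
      _ ≤ ‖F ξ‖ ^ 2 := hb
  have hFξ : ‖F ξ‖ ≤ ‖F‖ := by
    calc ‖F ξ‖ ≤ ‖F‖ * ‖ξ‖ := F.le_opNorm ξ
      _ = ‖F‖ := by rw [hξ, mul_one]
  have h2 : (lvlCoef c k * r ^ k) ^ 2 ≤ ‖F‖ ^ 2 := by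
    rw [mul_pow, lvlCoef, Real.sq_sqrt (Finset.sum_nonneg fun w _ => sq_nonneg _)]
    calc (∑ w : Fin k → Fin n, ‖c (List.ofFn w)‖ ^ 2) * (r ^ k) ^ 2
        = (r ^ k) ^ 2 * ∑ w : Fin k → Fin n, ‖c (List.ofFn w)‖ ^ 2 := mul_comm _ _
      _ ≤ ‖F ξ‖ ^ 2 := hsum
      _ ≤ ‖F‖ ^ 2 := by
          have := sq_le_sq' (by linarith [norm_nonneg (F ξ)]) hFξ
          simpa using this
  have := Real.sqrt_le_sqrt h2
  rwa [Real.sqrt_sq (mul_nonneg (lvlCoef_nonneg c k) (pow_nonneg hr k)),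
    Real.sqrt_sq (norm_nonneg F)] at this



lemma tendsto_rpow_one_div_two_mul (C : ℝ) (hC : 1 ≤ C) :
    Tendsto (fun k : ℕ => C ^ (1 / (2 * (k : ℝ)))) atTop (𝓝 1) := by
  have h0 : (0:ℝ) < C := lt_of_lt_of_le one_pos hC
  have h1 : Tendsto (fun k : ℕ => 2 * (k : ℝ)) atTop atTop :=
    Tendsto.const_mul_atTop two_pos tendsto_natCast_atTop_atTop
  have h2 : Tendsto (fun k : ℕ => 1 / (2 * (k : ℝ))) atTop (𝓝 0) := by
    have h2' := h1.inv_tendsto_atTop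
    have : (fun k : ℕ => 2 * (k : ℝ))⁻¹ = fun k : ℕ => 1 / (2 * (k : ℝ)) := by
      funext k; simp [one_div]
    rwa [this] at h2'
  have h3 : Tendsto (fun k : ℕ => Real.log C * (1 / (2 * (k : ℝ)))) atTop (𝓝 0) := by
    simpa using h2.const_mul (Real.log C)
  have h4 := (Real.continuous_exp.tendsto 0).comp h3
  rw [Real.exp_zero] at h4
  refine h4.congr fun k => ?_
  rw [Function.comp_apply, ← Real.rpow_def_of_pos h0]

include hS in
lemma summable_lvlOp (c : List (Fin n) → ℂ) (hc : radiusInv c ≤ 1)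
    (r : ℝ) (h0 : 0 ≤ r) (h1 : r < 1) :
    Summable (fun k : ℕ => ((r : ℂ) ^ k) • lvlOp c S k) := by
  set s : ℝ := max r (1/2) with hs
  have hs0 : 0 < s := lt_of_lt_of_le one_half_pos (le_max_right _ _)
  have hs1 : s < 1 := max_lt h1 one_half_lt_one
  have hrs : r ≤ s := le_max_left _ _
  set t : ℝ := (1 + s)/2 with ht
  have hst : s < t := by rw [ht]; linarith
  have ht1 : t < 1 := by rw [ht]; linarith
  have ht0 : 0 < t := lt_trans hs0 hst
  set ρ : ℝ := Real.sqrt (t / s) with hρ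
  have hρ0 : 0 < ρ := Real.sqrt_pos.mpr (div_pos ht0 hs0)
  have hρ2 : ρ ^ 2 = t / s := Real.sq_sqrt (div_pos ht0 hs0).le
  have hρ1 : 1 < ρ := by
    nlinarith [hρ2, (one_lt_div hs0).mpr hst]
  have hc' : Filter.limsup
      (fun k : ℕ => ENNReal.ofReal (lvlCoef c k ^ (1 / (2 * (k : ℝ))))) Filter.atTop ≤ 1 := hc
  have hev : ∀ᶠ k in atTop,
      ENNReal.ofReal (lvlCoef c k ^ (1 / (2 * (k : ℝ)))) < ENNReal.ofReal ρ := by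
    refine eventually_lt_of_limsup_lt ?_ (by isBoundedDefault)
    refine lt_of_le_of_lt hc' ?_
    rw [← ENNReal.ofReal_one]
    exact (ENNReal.ofReal_lt_ofReal_iff hρ0).mpr hρ1
  have hbound : ∀ᶠ k in atTop, ‖((r : ℂ) ^ k) • lvlOp c S k‖ ≤ t ^ k := by
    filter_upwards [hev, eventually_ge_atTop 1] with k hk hk1
    have hx : 0 ≤ lvlCoef c k := lvlCoef_nonneg c k
    have hk' : lvlCoef c k ^ (1 / (2 * (k : ℝ))) < ρ :=
      (ENNReal.ofReal_lt_ofReal_iff hρ0).mp hk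
    have h2k : (0:ℝ) < 2 * (k : ℝ) := by
      have : (1:ℝ) ≤ (k:ℝ) := by exact_mod_cast hk1
      linarith
    have hlvl : lvlCoef c k ≤ (ρ ^ 2) ^ k := by
      have e1 : (lvlCoef c k ^ (1 / (2 * (k : ℝ)))) ^ (2 * (k : ℝ))
          ≤ ρ ^ (2 * (k : ℝ)) :=
        Real.rpow_le_rpow (Real.rpow_nonneg hx _) hk'.le h2k.le
      have e2 : (lvlCoef c k ^ (1 / (2 * (k : ℝ)))) ^ (2 * (k : ℝ)) = lvlCoef c k := by
        rw [← Real.rpow_mul hx]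
        rw [one_div, inv_mul_cancel₀ (ne_of_gt h2k), Real.rpow_one]
      have e3 : ρ ^ (2 * (k : ℝ)) = (ρ ^ 2) ^ k := by
        rw [show (2 * (k:ℝ)) = ((2 * k : ℕ) : ℝ) by push_cast; ring,
          Real.rpow_natCast, pow_mul]
      rw [e2, e3] at e1
      exact e1
    have hnorm : ‖((r : ℂ) ^ k) • lvlOp c S k‖ ≤ r ^ k * lvlCoef c k := by
      rw [norm_smul, norm_pow, Complex.norm_real, Real.norm_eq_abs, abs_of_nonneg h0]
      exact mul_le_mul_of_nonneg_left (lvlOp_opNorm_le S hS c k) (pow_nonneg h0 k)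
    calc ‖((r : ℂ) ^ k) • lvlOp c S k‖ ≤ r ^ k * lvlCoef c k := hnorm
      _ ≤ s ^ k * (ρ ^ 2) ^ k := by
          exact mul_le_mul (pow_le_pow_left₀ h0 hrs k) hlvl hx (pow_nonneg hs0.le k)
      _ = t ^ k := by
          rw [hρ2, ← mul_pow, mul_div_cancel₀ _ (ne_of_gt hs0)]
  exact Summable.of_norm_bounded_eventually_nat
    (summable_geometric_of_lt_one ht0.le ht1) hbound

end aux

section main
variable {E : Type*} [NormedAddCommGroup E] [InnerProductSpace ℂ E] [CompleteSpace E]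
local notation "⟪" x ", " y "⟫" => @inner ℂ _ _ x y

theorem stmt_17' {n : ℕ} (hn : 0 < n)
    {E : Type*} [NormedAddCommGroup E] [InnerProductSpace ℂ E] [CompleteSpace E]
    (S : Fin n → E →L[ℂ] E)
    (hS : ∀ i j, ContinuousLinearMap.adjoint (S i) ∘L S j = if i = j then 1 else 0)
    (ξ : E) (hξ : ‖ξ‖ = 1) (hvac : ∀ i, ContinuousLinearMap.adjoint (S i) ξ = 0)
    (a : ℕ → List (Fin n) → ℂ) (ha : ∀ m, radiusInv (a m) ≤ 1)
    (hconv : ∀ r : ℝ, 0 ≤ r → r < 1 → ∃ L : E →L[ℂ] E,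
      Filter.Tendsto (fun m : ℕ => ∑' k : ℕ, ((r : ℂ) ^ k) • lvlOp (a m) S k)
        Filter.atTop (nhds L)) :
    ∃ b : List (Fin n) → ℂ,
      (∀ α : List (Fin n),
        Filter.Tendsto (fun m : ℕ => a m α) Filter.atTop (nhds (b α))) ∧
      radiusInv b ≤ 1 ∧
      ∀ r : ℝ, 0 ≤ r → r < 1 →
        Filter.Tendsto (fun m : ℕ => ∑' k : ℕ, ((r : ℂ) ^ k) • lvlOp (a m) S k)
          Filter.atTop (nhds (∑' k : ℕ, ((r : ℂ) ^ k) • lvlOp b S k)) := by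
  classical
  have hsum : ∀ m (r : ℝ), 0 ≤ r → r < 1 →
      Summable (fun k : ℕ => ((r : ℂ) ^ k) • lvlOp (a m) S k) :=
    fun m r h0 h1 => summable_lvlOp S hS (a m) (ha m) r h0 h1
  obtain ⟨L, hL⟩ := hconv (1/2) (by norm_num) (by norm_num)
  set b : List (Fin n) → ℂ := fun α => (2:ℂ) ^ α.length * ⟪wordProd S α ξ, L ξ⟫ with hbdef
  have half0 : (0:ℝ) ≤ 1/2 := by norm_num
  have half1 : (1/2:ℝ) < 1 := by norm_num
  have hextr : ∀ m (r : ℝ), 0 ≤ r → r < 1 → ∀ α : List (Fin n),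
      ⟪wordProd S α ξ, (∑' k : ℕ, ((r : ℂ) ^ k) • lvlOp (a m) S k) ξ⟫
        = (r : ℂ) ^ α.length * a m α :=
    fun m r h0 h1 α =>
      inner_word_hasSum S hS ξ hξ hvac (a m) r (hsum m r h0 h1).hasSum α
  have hFξ : ∀ (r : ℝ) (L' : E →L[ℂ] E),
      Tendsto (fun m => ∑' k : ℕ, ((r : ℂ) ^ k) • lvlOp (a m) S k) atTop (𝓝 L') →
      ∀ α : List (Fin n),
        Tendsto (fun m => ⟪wordProd S α ξ, (∑' k : ℕ, ((r : ℂ) ^ k) • lvlOp (a m) S k) ξ⟫)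
          atTop (𝓝 ⟪wordProd S α ξ, L' ξ⟫) := by
    intro r L' hL' α
    have h1 : Tendsto (fun m => (∑' k : ℕ, ((r : ℂ) ^ k) • lvlOp (a m) S k) ξ)
        atTop (𝓝 (L' ξ)) :=
      ((ContinuousLinearMap.apply ℂ E ξ).continuous.tendsto L').comp hL'
    exact ((innerSL ℂ (wordProd S α ξ)).continuous.tendsto (L' ξ)).comp h1
  have hcoef : ∀ α : List (Fin n), Tendsto (fun m => a m α) atTop (𝓝 (b α)) := by
    intro α
    have h2 := (hFξ (1/2) L hL α).const_mul ((2:ℂ) ^ α.length)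
    refine Tendsto.congr ?_ h2
    intro m
    rw [hextr m (1/2) half0 half1 α, ← mul_assoc]
    have h3 : ((2:ℂ)) ^ α.length * (((1/2 : ℝ) : ℂ)) ^ α.length = 1 := by
      rw [← mul_pow]; norm_num
    rw [h3, one_mul]
  have hlvlCoefTendsto : ∀ k, Tendsto (fun m => lvlCoef (a m) k) atTop (𝓝 (lvlCoef b k)) := by
    intro k
    unfold lvlCoef
    apply (Real.continuous_sqrt.tendsto _).comp
    apply tendsto_finset_sum
    intro w _
    exact (hcoef (List.ofFn w)).norm.pow 2
  have key : ∀ r : ℝ, 0 ≤ r → r < 1 → ∃ C : ℝ, 0 ≤ C ∧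
      (∀ m k, lvlCoef (a m) k * r ^ k ≤ C) ∧ (∀ k, lvlCoef b k * r ^ k ≤ C) := by
    intro r h0 h1
    obtain ⟨L', hL'⟩ := hconv r h0 h1
    obtain ⟨C, hC⟩ := hL'.norm.bddAbove_range
    have hC' : ∀ m, ‖∑' k : ℕ, ((r : ℂ) ^ k) • lvlOp (a m) S k‖ ≤ C := fun m => hC ⟨m, rfl⟩
    have hnorm : ∀ m k, lvlCoef (a m) k * r ^ k ≤ C := fun m k =>
      le_trans (bessel_bound S hS ξ hξ hvac (a m) r h0 (hsum m r h0 h1).hasSum k) (hC' m)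
    have hC0 : 0 ≤ C :=
      le_trans (mul_nonneg (lvlCoef_nonneg (a 0) 0) (pow_nonneg h0 0)) (hnorm 0 0)
    refine ⟨C, hC0, hnorm, fun k => ?_⟩
    have htend : Tendsto (fun m => lvlCoef (a m) k * r ^ k) atTop
        (𝓝 (lvlCoef b k * r ^ k)) := (hlvlCoefTendsto k).mul_const _
    exact le_of_tendsto htend (Eventually.of_forall fun m => hnorm m k)
  have part2 : radiusInv b ≤ 1 := by
    show Filter.limsup _ _ ≤ 1
    refine ENNReal.le_of_forall_pos_le_add fun ε hε _ => ?_
    set δ : ℝ := (ε : ℝ) with hδdef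
    have hδ : (0:ℝ) < δ := hε
    have h1δ : (0:ℝ) < 1 + δ/2 := by linarith
    set r : ℝ := ((1 + δ/2)⁻¹) ^ 2 with hrdef
    have hr0 : 0 < r := by positivity
    have hinv1 : (1 + δ/2)⁻¹ < 1 := by
      rw [inv_lt_one_iff₀]; right; linarith
    have hr1 : r < 1 := by
      rw [hrdef]
      exact pow_lt_one₀ (by positivity) hinv1 (by norm_num)
    obtain ⟨C, hC0, _, hCb⟩ := key r hr0.le hr1
    set C' : ℝ := max C 1 with hC'def
    have hC'1 : (1:ℝ) ≤ C' := le_max_right _ _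
    have hC'0 : (0:ℝ) < C' := lt_of_lt_of_le one_pos hC'1
    have hb : ∀ k, lvlCoef b k ≤ C' * (r⁻¹) ^ k := by
      intro k
      have h2 : lvlCoef b k ≤ C / r ^ k := (le_div_iff₀ (pow_pos hr0 k)).mpr (hCb k)
      calc lvlCoef b k ≤ C / r ^ k := h2
        _ ≤ C' * (r⁻¹) ^ k := by
            rw [div_eq_mul_inv, ← inv_pow]
            exact mul_le_mul_of_nonneg_right (le_max_left _ _) (by positivity)
    have hquot : (1:ℝ) < (1 + δ) / (1 + δ/2) := by
      rw [lt_div_iff₀ h1δ]; linarith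
    have hev1 : ∀ᶠ k : ℕ in atTop, C' ^ (1 / (2 * (k : ℝ))) ≤ (1 + δ) / (1 + δ/2) :=
      (tendsto_rpow_one_div_two_mul C' hC'1).eventually_le_const hquot
    have hof : (1 : ℝ≥0∞) + (ε : ℝ≥0∞) = ENNReal.ofReal (1 + δ) := by
      rw [ENNReal.ofReal_add one_pos.le (NNReal.coe_nonneg ε), ENNReal.ofReal_one,
        ENNReal.ofReal_coe_nnreal]
    refine Filter.limsup_le_of_le (by isBoundedDefault) ?_
    filter_upwards [hev1, eventually_ge_atTop 1] with k hk1 hk2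
    have hkpos : (0:ℝ) < 2 * (k : ℝ) := by
      have : (1:ℝ) ≤ (k:ℝ) := by exact_mod_cast hk2
      linarith
    have e1 : lvlCoef b k ^ (1 / (2 * (k : ℝ)))
        ≤ (C' * (r⁻¹) ^ k) ^ (1 / (2 * (k : ℝ))) :=
      Real.rpow_le_rpow (lvlCoef_nonneg b k) (hb k) (by positivity)
    have e2 : (C' * (r⁻¹) ^ k) ^ (1 / (2 * (k : ℝ)))
        = C' ^ (1 / (2 * (k : ℝ))) * ((r⁻¹) ^ k : ℝ) ^ (1 / (2 * (k : ℝ))) :=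
      Real.mul_rpow hC'0.le (by positivity)
    have e3 : ((r⁻¹) ^ k : ℝ) ^ (1 / (2 * (k : ℝ))) = (r⁻¹) ^ ((1:ℝ)/2) := by
      rw [← Real.rpow_natCast (r⁻¹) k, ← Real.rpow_mul (by positivity)]
      congr 1
      field_simp
    have e4 : (r⁻¹ : ℝ) ^ ((1:ℝ)/2) = 1 + δ/2 := by
      have hr' : r⁻¹ = (1 + δ/2) ^ (2:ℕ) := by rw [hrdef, inv_pow, inv_inv]
      rw [hr', ← Real.rpow_natCast (1 + δ/2) 2, ← Real.rpow_mul h1δ.le]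
      norm_num
    have hklvl : lvlCoef b k ^ (1 / (2 * (k : ℝ))) ≤ 1 + δ := by
      calc lvlCoef b k ^ (1 / (2 * (k : ℝ)))
          ≤ C' ^ (1 / (2 * (k : ℝ))) * (1 + δ/2) := by rw [e2, e3, e4] at e1; exact e1
        _ ≤ ((1 + δ) / (1 + δ/2)) * (1 + δ/2) :=
            mul_le_mul_of_nonneg_right hk1 h1δ.le
        _ = 1 + δ := by field_simp
    rw [hof]
    exact ENNReal.ofReal_le_ofReal hklvl
  refine ⟨b, hcoef, part2, ?_⟩
  intro r h0 h1
  set r' : ℝ := (1 + r)/2 with hr'def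
  have hr'0 : 0 < r' := by rw [hr'def]; linarith
  have hr'1 : r' < 1 := by rw [hr'def]; linarith
  have hrr' : r < r' := by rw [hr'def]; linarith
  obtain ⟨C, hC0, hCa, hCb⟩ := key r' hr'0.le hr'1
  apply tendsto_tsum_of_dominated_convergence (bound := fun k : ℕ => C * (r/r') ^ k)
  · exact (summable_geometric_of_lt_one (div_nonneg h0 hr'0.le)
      ((div_lt_one hr'0).mpr hrr')).mul_left C
  · intro k
    have h2 : Tendsto (fun m => lvlOp (a m) S k) atTop (𝓝 (lvlOp b S k)) := by
      unfold lvlOp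
      apply tendsto_finset_sum
      intro w _
      exact (hcoef (List.ofFn w)).smul_const (wordProd S (List.ofFn w))
    exact h2.const_smul ((r : ℂ) ^ k)
  · refine Eventually.of_forall fun m k => ?_
    have h2 : ‖((r : ℂ) ^ k) • lvlOp (a m) S k‖ ≤ r ^ k * lvlCoef (a m) k := by
      rw [norm_smul, norm_pow, Complex.norm_real, Real.norm_eq_abs, abs_of_nonneg h0]
      exact mul_le_mul_of_nonneg_left (lvlOp_opNorm_le S hS (a m) k) (pow_nonneg h0 k)
    have h3 : lvlCoef (a m) k ≤ C / r' ^ k := (le_div_iff₀ (pow_pos hr'0 k)).mpr (hCa m k)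
    calc ‖((r : ℂ) ^ k) • lvlOp (a m) S k‖ ≤ r ^ k * lvlCoef (a m) k := h2
      _ ≤ r ^ k * (C / r' ^ k) := mul_le_mul_of_nonneg_left h3 (pow_nonneg h0 k)
      _ = C * (r/r') ^ k := by
          rw [mul_comm, div_mul_eq_mul_div, mul_div_assoc, ← div_pow]

end main


/-- **Weierstrass-type theorem for free holomorphic functions.** If each `a^{(m)}` satisfies
the Hadamard bound `limsup ≤ 1`, and for every `r ∈ [0,1)` the sequence
`(F_m(rS))_m` converges in operator norm, then the coefficients converge pointwise to
limits `a_α` which again satisfy the Hadamard bound, and `F_m(rS) → F(rS)` in operator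
norm for every `r ∈ [0,1)`. -/
theorem stmt_17 {n : ℕ} (hn : 0 < n)
    {E : Type*} [NormedAddCommGroup E] [InnerProductSpace ℂ E] [CompleteSpace E]
    (S : Fin n → E →L[ℂ] E)
    (hS : ∀ i j, ContinuousLinearMap.adjoint (S i) ∘L S j = if i = j then 1 else 0)
    (ξ : E) (hξ : ‖ξ‖ = 1) (hvac : ∀ i, ContinuousLinearMap.adjoint (S i) ξ = 0)
    (a : ℕ → List (Fin n) → ℂ) (ha : ∀ m, radiusInv (a m) ≤ 1)
    (hconv : ∀ r : ℝ, 0 ≤ r → r < 1 → ∃ L : E →L[ℂ] E,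
      Filter.Tendsto (fun m : ℕ => ∑' k : ℕ, ((r : ℂ) ^ k) • lvlOp (a m) S k)
        Filter.atTop (nhds L)) :
    ∃ b : List (Fin n) → ℂ,
      (∀ α : List (Fin n),
        Filter.Tendsto (fun m : ℕ => a m α) Filter.atTop (nhds (b α))) ∧
      radiusInv b ≤ 1 ∧
      ∀ r : ℝ, 0 ≤ r → r < 1 →
        Filter.Tendsto (fun m : ℕ => ∑' k : ℕ, ((r : ℂ) ^ k) • lvlOp (a m) S k)
          Filter.atTop (nhds (∑' k : ℕ, ((r : ℂ) ^ k) • lvlOp b S k)) :=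
  stmt_17' hn S hS ξ hξ hvac a ha hconv
end
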